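/- Suppose an ontological model over a finite ontic space Λ assigns to each of the 8 'octants' a nonempty set Λ_{x,y,z} (pairwise disjoint, covering Λ), and represents each transformation by a stochastic map on Λ. If the Pauli transformations are required to map Λ_{x,y,z} onto Λ_{x,-y,-z}, Λ_{-x,y,-z}, Λ_{-x,-y,z} respectively (and identity to itself), while the Hadamard maps Λ_{x,y,z} onto Λ_{z,-y,x}, then the coarse-grained stochastic map of T₁ = uniform mixture of {I,X,Y,Z} assigns probability 1/4 to each octant of the same parity xyz, while that of T₂ = H∘T₁ assigns probability 1/4 to each octant of opposite parity; hence the coarse-grained maps of T₁ and T₂ differ. -/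
import Mathlib

abbrev Octant := ℤˣ × ℤˣ × ℤˣ

def octParity (v : Octant) : ℤˣ := v.1 * v.2.1 * v.2.2

def actI (v : Octant) : Octant := v
def actX (v : Octant) : Octant := (v.1, -v.2.1, -v.2.2)
def actY (v : Octant) : Octant := (-v.1, v.2.1, -v.2.2)
def actZ (v : Octant) : Octant := (-v.1, -v.2.1, v.2.2)
def actH (v : Octant) : Octant := (v.2.2, -v.2.1, v.1)

lemma key1 (v w : Octant) :
    ((if w = actI v then (1:ℚ) else 0) + (if w = actX v then 1 else 0) +
     (if w = actY v then 1 else 0) + (if w = actZ v then 1 else 0)) =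
    if octParity w = octParity v then 1 else 0 := by
  obtain ⟨a, b, c⟩ := v; obtain ⟨d, e, f⟩ := w
  rcases Int.units_eq_one_or a with rfl | rfl <;>
  rcases Int.units_eq_one_or b with rfl | rfl <;>
  rcases Int.units_eq_one_or c with rfl | rfl <;>
  rcases Int.units_eq_one_or d with rfl | rfl <;>
  rcases Int.units_eq_one_or e with rfl | rfl <;>
  rcases Int.units_eq_one_or f with rfl | rfl <;>
  simp [actI, actX, actY, actZ, octParity, Prod.ext_iff]

lemma actH_invol (v : Octant) : actH (actH v) = v := by
  simp [actH]

lemma parity_actH (v : Octant) : octParity (actH v) = -octParity v := by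
  obtain ⟨a, b, c⟩ := v
  simp only [octParity, actH, neg_mul, mul_neg]
  congr 1
  rw [mul_comm, mul_assoc, mul_comm c b]

/-- In any ontological model over a finite ontic space Λ partitioned into 8 nonempty
octants, if the Pauli transformations map each octant onto the appropriate octant and the
Hadamard maps each octant onto its image octant, then the coarse-grained stochastic map of
T₁ (uniform mixture of I, X, Y, Z) gives weight 1/4 to each octant of equal parity, that
of T₂ = H∘T₁ gives weight 1/4 to each octant of opposite parity, and the two
coarse-grained maps differ. -/
theorem coarse_grained_T1_ne_T2
    {Λ : Type} [Fintype Λ] [DecidableEq Λ]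
    (Λset : Octant → Finset Λ)
    (hne : ∀ v, (Λset v).Nonempty)
    (hdisj : ∀ v w, v ≠ w → Disjoint (Λset v) (Λset w))
    (hcover : ∀ l : Λ, ∃ v, l ∈ Λset v)
    (ΓI ΓX ΓY ΓZ ΓH : Λ → Λ → ℚ)
    (hnn : ∀ Γ ∈ [ΓI, ΓX, ΓY, ΓZ, ΓH], ∀ l' l, 0 ≤ Γ l' l)
    (hst : ∀ Γ ∈ [ΓI, ΓX, ΓY, ΓZ, ΓH], ∀ l : Λ, ∑ l' : Λ, Γ l' l = 1)
    (hI : ∀ v, ∀ l ∈ Λset v, ∑ l' ∈ Λset (actI v), ΓI l' l = 1)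
    (hX : ∀ v, ∀ l ∈ Λset v, ∑ l' ∈ Λset (actX v), ΓX l' l = 1)
    (hY : ∀ v, ∀ l ∈ Λset v, ∑ l' ∈ Λset (actY v), ΓY l' l = 1)
    (hZ : ∀ v, ∀ l ∈ Λset v, ∑ l' ∈ Λset (actZ v), ΓZ l' l = 1)
    (hH : ∀ v, ∀ l ∈ Λset v, ∑ l' ∈ Λset (actH v), ΓH l' l = 1)
    (T₁ T₂ : Λ → Λ → ℚ)
    (hT₁ : ∀ l' l, T₁ l' l = (ΓI l' l + ΓX l' l + ΓY l' l + ΓZ l' l) / 4)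
    (hT₂ : ∀ l' l, T₂ l' l = ∑ m : Λ, ΓH l' m * T₁ m l) :
    (∀ v w, ∀ l ∈ Λset v, ∑ l' ∈ Λset w, T₁ l' l =
        if octParity w = octParity v then 1/4 else 0) ∧
    (∀ v w, ∀ l ∈ Λset v, ∑ l' ∈ Λset w, T₂ l' l =
        if octParity w = -octParity v then 1/4 else 0) ∧
    ∃ v w, ∃ l ∈ Λset v, ∑ l' ∈ Λset w, T₁ l' l ≠ ∑ l' ∈ Λset w, T₂ l' l := by
  -- key lemma: a stochastic map concentrated on one octant gives 0 to the others
  have key : ∀ (Γ : Λ → Λ → ℚ), (∀ l' l, 0 ≤ Γ l' l) → (∀ l : Λ, ∑ l' : Λ, Γ l' l = 1) →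
      ∀ (f : Octant → Octant), (∀ v, ∀ l ∈ Λset v, ∑ l' ∈ Λset (f v), Γ l' l = 1) →
      ∀ v w, ∀ l ∈ Λset v, ∑ l' ∈ Λset w, Γ l' l = if w = f v then 1 else 0 := by
    intro Γ hΓnn hΓst f hf v w l hl
    by_cases h : w = f v
    · subst h; simp [hf v l hl]
    · simp only [h, if_false]
      have hd : Disjoint (Λset w) (Λset (f v)) := hdisj _ _ h
      have hsub : Λset w ∪ Λset (f v) ⊆ Finset.univ := Finset.subset_univ _
      have h1 : ∑ l' ∈ Λset w ∪ Λset (f v), Γ l' l ≤ 1 := by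
        rw [← hΓst l]
        exact Finset.sum_le_sum_of_subset_of_nonneg hsub (fun i _ _ => hΓnn i l)
      rw [Finset.sum_union hd, hf v l hl] at h1
      have h2 : (0:ℚ) ≤ ∑ l' ∈ Λset w, Γ l' l :=
        Finset.sum_nonneg fun i _ => hΓnn i l
      linarith
  have kI := key ΓI (hnn ΓI (by simp)) (hst ΓI (by simp)) actI hI
  have kX := key ΓX (hnn ΓX (by simp)) (hst ΓX (by simp)) actX hX
  have kY := key ΓY (hnn ΓY (by simp)) (hst ΓY (by simp)) actY hY
  have kZ := key ΓZ (hnn ΓZ (by simp)) (hst ΓZ (by simp)) actZ hZ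
  have kH := key ΓH (hnn ΓH (by simp)) (hst ΓH (by simp)) actH hH
  -- part 1
  have part1 : ∀ v w, ∀ l ∈ Λset v, ∑ l' ∈ Λset w, T₁ l' l =
      if octParity w = octParity v then 1/4 else 0 := by
    intro v w l hl
    have : ∑ l' ∈ Λset w, T₁ l' l =
        ((∑ l' ∈ Λset w, ΓI l' l) + (∑ l' ∈ Λset w, ΓX l' l) +
         (∑ l' ∈ Λset w, ΓY l' l) + (∑ l' ∈ Λset w, ΓZ l' l)) / 4 := by
      simp only [hT₁, Finset.sum_div, ← Finset.sum_add_distrib]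
    rw [this, kI v w l hl, kX v w l hl, kY v w l hl, kZ v w l hl, key1 v w]
    by_cases h : octParity w = octParity v <;> simp [h]
  have part2 : ∀ v w, ∀ l ∈ Λset v, ∑ l' ∈ Λset w, T₂ l' l =
      if octParity w = -octParity v then 1/4 else 0 := by
    intro v w l hl
    -- partition of Λ into octants
    have hpart : ∀ (g : Λ → ℚ), ∑ m : Λ, g m = ∑ u : Octant, ∑ m ∈ Λset u, g m := by
      intro g
      rw [← Finset.sum_biUnion (fun a _ b _ hab => hdisj a b hab)]
      apply Finset.sum_congr _ (fun _ _ => rfl)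
      ext m
      simpa [Finset.mem_biUnion] using hcover m
    have step : ∑ l' ∈ Λset w, T₂ l' l =
        ∑ u : Octant, ∑ m ∈ Λset u, (∑ l' ∈ Λset w, ΓH l' m) * T₁ m l := by
      simp only [hT₂]
      rw [Finset.sum_comm]
      rw [hpart (fun m => ∑ l' ∈ Λset w, ΓH l' m * T₁ m l)]
      refine Finset.sum_congr rfl fun u _ => Finset.sum_congr rfl fun m _ => ?_
      rw [Finset.sum_mul]
    rw [step]
    have inner : ∀ u : Octant, ∑ m ∈ Λset u, (∑ l' ∈ Λset w, ΓH l' m) * T₁ m l =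
        (if w = actH u then 1 else 0) * (if octParity u = octParity v then 1/4 else 0) := by
      intro u
      have : ∀ m ∈ Λset u, (∑ l' ∈ Λset w, ΓH l' m) * T₁ m l =
          (if w = actH u then 1 else 0) * T₁ m l := by
        intro m hm; rw [kH u w m hm]
      rw [Finset.sum_congr rfl this, ← Finset.mul_sum, part1 v u l hl]
    rw [Finset.sum_congr rfl (fun u _ => inner u)]
    have : ∀ u : Octant, w = actH u ↔ u = actH w := by
      intro u
      constructor
      · rintro rfl; exact (actH_invol u).symm
      · rintro rfl; exact (actH_invol w).symm
    rw [Finset.sum_congr rfl (fun u _ => by rw [if_congr (this u) rfl rfl, boole_mul])]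
    rw [Finset.sum_ite_eq' Finset.univ (actH w)
      (fun u => (if octParity u = octParity v then (1:ℚ)/4 else 0))]
    simp only [Finset.mem_univ, if_true]
    refine if_congr ?_ rfl rfl
    rw [parity_actH]
    exact neg_eq_iff_eq_neg
  refine ⟨part1, part2, ?_⟩
  obtain ⟨l, hl⟩ := hne (1, 1, 1)
  refine ⟨(1,1,1), (1,1,1), l, hl, ?_⟩
  rw [part1 (1,1,1) (1,1,1) l hl, part2 (1,1,1) (1,1,1) l hl]
  have h1 : octParity ((1,1,1) : Octant) = 1 := by simp [octParity]
  rw [h1]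
  norm_num
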